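/- Let Z ⊆ ℝ² be a closed set with the following property: for every (x,y) ∈ Z there exists ε > 0 such that the bow-tie set ([x−ε,x]×[y−ε,y]) ∪ ([x,x+ε]×[y,y+ε]) intersects Z only at (x,y). Then Z is nowhere dense in ℝ². -/

import Mathlib

/-!
If the interior of `closure Z` contained a point, it would contain a point `p` of `Z`. The open
quadrant `{q | p.1 < q.1 ∧ p.2 < q.2}` accumulates at `p`, and `Z` is dense near `p`, so `Z` has
points in that quadrant arbitrarily close to `p`: they lie in the upper half of every bow-tie at
`p`, which is impossible.
-/

open Set Topology

theorem isNowhereDense_of_forall_notMem_closure_inter {X : Type*} [TopologicalSpace X]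
    {Z : Set X} (h : ∀ p ∈ Z, ∃ W, IsOpen W ∧ p ∈ closure W ∧ p ∉ closure (W ∩ Z)) :
    IsNowhereDense Z := by
  by_contra hZ
  obtain ⟨x, hx⟩ := nonempty_iff_ne_empty.mpr hZ
  obtain ⟨p, hpU, hpZ⟩ : (interior (closure Z) ∩ Z).Nonempty :=
    mem_closure_iff.mp (interior_subset hx) _ isOpen_interior hx
  obtain ⟨W, hW, hpW, hpWZ⟩ := h p hpZ
  refine hpWZ (closure_minimal ?_ isClosed_closure (isOpen_interior.inter_closure ⟨hpU, hpW⟩))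
  calc interior (closure Z) ∩ W ⊆ W ∩ closure Z := fun q hq => ⟨hq.2, interior_subset hq.1⟩
    _ ⊆ closure (W ∩ Z) := hW.inter_closure

section Quadrant

variable {α β : Type*} [LinearOrder α] [TopologicalSpace α] [OrderTopology α]
  [LinearOrder β] [TopologicalSpace β] [OrderTopology β]

theorem mem_closure_Ioi_prod_Ioi [DenselyOrdered α] [NoMaxOrder α] [DenselyOrdered β]
    [NoMaxOrder β] (p : α × β) : p ∈ closure (Ioi p.1 ×ˢ Ioi p.2) := by
  rw [closure_prod_eq, closure_Ioi, closure_Ioi]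
  exact ⟨self_mem_Ici, self_mem_Ici⟩

theorem notMem_closure_Ioi_prod_Ioi_inter {p : α × β} {Z : Set (α × β)} {a : α} {b : β}
    (ha : p.1 < a) (hb : p.2 < b) (hZ : Icc p.1 a ×ˢ Icc p.2 b ∩ Z ⊆ {p}) :
    p ∉ closure (Ioi p.1 ×ˢ Ioi p.2 ∩ Z) := by
  rw [mem_closure_iff_nhds]
  intro h
  obtain ⟨q, ⟨hqa, hqb⟩, ⟨hpq₁, hpq₂⟩, hqZ⟩ :=
    h _ (prod_mem_nhds (Iio_mem_nhds ha) (Iio_mem_nhds hb))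
  have hqp : q = p :=
    hZ ⟨⟨⟨hpq₁.le, hqa.le⟩, ⟨hpq₂.le, hqb.le⟩⟩, hqZ⟩
  exact (ne_of_gt hpq₁) (congrArg Prod.fst hqp)

end Quadrant

theorem stmt5_general (Z : Set (ℝ × ℝ))
    (hbow : ∀ p ∈ Z, ∃ ε > (0 : ℝ),
      ((Icc (p.1 - ε) p.1 ×ˢ Icc (p.2 - ε) p.2) ∪
        (Icc p.1 (p.1 + ε) ×ˢ Icc p.2 (p.2 + ε))) ∩ Z = {p}) :
    IsNowhereDense Z := by
  refine isNowhereDense_of_forall_notMem_closure_inter fun p hp => ⟨Ioi p.1 ×ˢ Ioi p.2,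
    isOpen_Ioi.prod isOpen_Ioi, mem_closure_Ioi_prod_Ioi p, ?_⟩
  obtain ⟨ε, hε, hbowp⟩ := hbow p hp
  refine notMem_closure_Ioi_prod_Ioi_inter (lt_add_of_pos_right _ hε)
    (lt_add_of_pos_right _ hε) ?_
  rw [← hbowp]
  exact inter_subset_inter_left _ subset_union_right

/-- If `Z ⊆ ℝ²` is closed and every point `(x,y) ∈ Z` has a bow-tie neighbourhood
`([x−ε,x]×[y−ε,y]) ∪ ([x,x+ε]×[y,y+ε])` meeting `Z` only at `(x,y)`, then `Z` is
nowhere dense. -/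
theorem stmt5 (Z : Set (ℝ × ℝ)) (hZ : IsClosed Z)
    (hbow : ∀ p ∈ Z, ∃ ε > (0 : ℝ),
      ((Icc (p.1 - ε) p.1 ×ˢ Icc (p.2 - ε) p.2) ∪
        (Icc p.1 (p.1 + ε) ×ˢ Icc p.2 (p.2 + ε))) ∩ Z = {p}) :
    IsNowhereDense Z :=
  stmt5_general Z hbow
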